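/- Let μ be a probability measure on E, U : E → [0,∞) bounded measurable, m ≥ 1. Define S_μ(x,dy) = e^{-U(x)/m}·δ_x(dy) + (1 - e^{-U(x)/m})·Ψ_{e^{-U/m}}(μ)(dy) and the jump generator L̂_μ(f)(x) = U(x)·∫(f(y) - f(x)) μ(dy). Then for every bounded measurable f with osc(f) ≤ 1 and every x, |m·(S_μ(f)(x) - f(x)) - L̂_μ(f)(x)| ≤ c·‖U‖²/m for a universal constant c (e.g. c = 2 works). -/

import Mathlib

/-!
Write `g = e^{-U/m}`, `Ψ f = μ(f g) / μ(g)` and `u = U(x)`. Then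
`m (S_μ f - f)(x) - L̂_μ f (x) = (m (1 - e^{-u/m}) - u) (Ψ f - f x) + u (Ψ f - μ f)`.
The first factor is at most `u² / (2m)` because `1 - t ≤ e^{-t} ≤ 1 - t + t² / 2` for `t ≥ 0`,
while `|Ψ f - f x| ≤ osc f`. For the second term, `w := e^{-‖U‖/m} ≤ g ≤ 1` and the covariance
identity `μ(f g) - μ(f) μ(g) = μ((f - μ f) (g - w))` give `|Ψ f - μ f| ≤ 1 - w ≤ ‖U‖ / m`.
-/

open MeasureTheory

namespace Real

lemma exp_neg_le_one_sub_add_sq_div_two {t : ℝ} (ht : 0 ≤ t) : exp (-t) ≤ 1 - t + t ^ 2 / 2 := by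
  have hq := quadratic_le_exp_of_nonneg ht
  rw [exp_neg, inv_le_iff_one_le_mul₀' (exp_pos t)]
  nlinarith [pow_nonneg ht 4, mul_le_mul_of_nonneg_left hq (by nlinarith : 0 ≤ 1 - t + t ^ 2 / 2)]

lemma abs_mul_one_sub_exp_neg_div_sub_le {u m : ℝ} (hu : 0 ≤ u) (hm : 0 < m) :
    |m * (1 - exp (-u / m)) - u| ≤ u ^ 2 / (2 * m) := by
  have hlow := mul_le_mul_of_nonneg_left (one_sub_le_exp_neg (u / m)) hm.le
  have hupp := mul_le_mul_of_nonneg_left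
    (exp_neg_le_one_sub_add_sq_div_two (div_nonneg hu hm.le)) hm.le
  have e₁ : m * (1 - u / m) = m - u := by field_simp
  have e₂ : m * (1 - u / m + (u / m) ^ 2 / 2) = m - u + u ^ 2 / (2 * m) := by field_simp
  rw [neg_div, abs_le]
  constructor <;> nlinarith [div_nonneg (sq_nonneg u) (by positivity : (0:ℝ) ≤ 2 * m)]

end Real

section BoltzmannGibbs

variable {α : Type*} [MeasurableSpace α] {μ : Measure α} {f g : α → ℝ} {K : ℝ}

/-- `Ψ_G(μ)(f)` in the paper's notation. -/
noncomputable def boltzmannGibbs (μ : Measure α) (G f : α → ℝ) : ℝ :=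
  (∫ y, f y * G y ∂μ) / ∫ y, G y ∂μ

lemma abs_integral_mul_sub_mul_integral_le (x : α) (hfg : Integrable (fun y => f y * g y) μ)
    (hg : Integrable g μ) (hg0 : ∀ y, 0 ≤ g y) (hf : ∀ y, |f y - f x| ≤ K) :
    |∫ y, f y * g y ∂μ - f x * ∫ y, g y ∂μ| ≤ K * ∫ y, g y ∂μ := by
  have hfxg : Integrable (fun y => f x * g y) μ := hg.const_mul (f x)
  rw [← integral_const_mul (f x) g, ← integral_sub hfg hfxg, ← integral_const_mul K g,
    ← Real.norm_eq_abs]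
  refine norm_integral_le_of_norm_le (hg.const_mul K) (ae_of_all _ fun y => ?_)
  rw [Real.norm_eq_abs, ← sub_mul, abs_mul, abs_of_nonneg (hg0 y)]
  exact mul_le_mul_of_nonneg_right (hf y) (hg0 y)

lemma abs_integral_sub_le [IsProbabilityMeasure μ] (x : α) (hf : Integrable f μ)
    (hosc : ∀ y, |f y - f x| ≤ K) : |∫ y, f y ∂μ - f x| ≤ K := by
  have h := abs_integral_mul_sub_mul_integral_le (g := fun _ => (1 : ℝ)) x
    (by simpa only [mul_one] using hf) (integrable_const 1) (fun _ => zero_le_one) hosc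
  simpa only [mul_one, integral_const, probReal_univ, smul_eq_mul] using h

lemma abs_boltzmannGibbs_sub_le (x : α) (hfg : Integrable (fun y => f y * g y) μ)
    (hg : Integrable g μ) (hg0 : ∀ y, 0 ≤ g y) (hZ : 0 < ∫ y, g y ∂μ)
    (hf : ∀ y, |f y - f x| ≤ K) : |boltzmannGibbs μ g f - f x| ≤ K := by
  rw [boltzmannGibbs, div_sub' hZ.ne', abs_div, abs_of_pos hZ, div_le_iff₀ hZ, mul_comm _ (f x)]
  exact abs_integral_mul_sub_mul_integral_le x hfg hg hg0 hf

lemma abs_integral_mul_sub_integral_mul_integral_le [IsProbabilityMeasure μ] (w : ℝ)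
    (hf : Integrable f μ) (hfg : Integrable (fun y => f y * g y) μ) (hg : Integrable g μ)
    (hgw : ∀ y, w ≤ g y) (hK : ∀ y, |f y - ∫ z, f z ∂μ| ≤ K) :
    |∫ y, f y * g y ∂μ - (∫ y, f y ∂μ) * ∫ y, g y ∂μ| ≤ K * (∫ y, g y ∂μ - w) := by
  set F := ∫ y, f y ∂μ
  have hFg : Integrable (fun y => F * g y) μ := hg.const_mul F
  have hfF : Integrable (fun y => f y - F) μ := hf.sub (integrable_const F)
  have hwfF : Integrable (fun y => w * (f y - F)) μ := hfF.const_mul w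
  have hfgF : Integrable (fun y => f y * g y - F * g y) μ := hfg.sub hFg
  have hcov : ∫ y, f y * g y ∂μ - F * ∫ y, g y ∂μ = ∫ y, (f y - F) * (g y - w) ∂μ := by
    have hsplit : (fun y => (f y - F) * (g y - w)) =
        fun y => (f y * g y - F * g y) - w * (f y - F) := by
      funext y; ring
    rw [hsplit, integral_sub hfgF hwfF, integral_sub hfg hFg, integral_const_mul,
      integral_const_mul, integral_sub hf (integrable_const F)]
    simp [F]
  have hgw_int : Integrable (fun y => g y - w) μ := hg.sub (integrable_const w)
  have hgw0 : ∀ y, 0 ≤ g y - w := fun y => sub_nonneg.2 (hgw y)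
  rw [hcov]
  calc |∫ y, (f y - F) * (g y - w) ∂μ| ≤ ∫ y, K * (g y - w) ∂μ := by
        rw [← Real.norm_eq_abs]
        exact norm_integral_le_of_norm_le (hgw_int.const_mul K) (ae_of_all _ fun y => by
          simp only [Real.norm_eq_abs, abs_mul, abs_of_nonneg (hgw0 y)]
          exact mul_le_mul_of_nonneg_right (hK y) (hgw0 y))
    _ = K * (∫ y, g y ∂μ - w) := by
        rw [integral_const_mul, integral_sub hg (integrable_const w)]
        simp

lemma abs_boltzmannGibbs_sub_integral_le [IsProbabilityMeasure μ] {w : ℝ} (hw : 0 < w)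
    (hf : Integrable f μ) (hfg : Integrable (fun y => f y * g y) μ) (hg : Integrable g μ)
    (hgw : ∀ y, w ≤ g y) (hg1 : ∀ y, g y ≤ 1) (hK : ∀ y, |f y - ∫ z, f z ∂μ| ≤ K) :
    |boltzmannGibbs μ g f - ∫ y, f y ∂μ| ≤ K * (1 - w) := by
  obtain ⟨x⟩ := nonempty_of_isProbabilityMeasure μ
  have hK0 : 0 ≤ K := (abs_nonneg _).trans (hK x)
  have hwZ : w ≤ ∫ y, g y ∂μ := by
    simpa using integral_mono (integrable_const w) hg hgw
  have hZ1 : ∫ y, g y ∂μ ≤ 1 := by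
    simpa using integral_mono hg (integrable_const 1) hg1
  have hZ : 0 < ∫ y, g y ∂μ := hw.trans_le hwZ
  have hcov := abs_integral_mul_sub_integral_mul_integral_le w hf hfg hg hgw hK
  rw [boltzmannGibbs, div_sub' hZ.ne', abs_div, abs_of_pos hZ, div_le_iff₀ hZ,
    mul_comm _ (∫ y, f y ∂μ)]
  nlinarith [mul_nonneg hK0 hw.le]

lemma abs_boltzmannGibbs_exp_sub_le [IsProbabilityMeasure μ] {U : α → ℝ} {C m : ℝ}
    (hU : Measurable U) (hU0 : ∀ y, 0 ≤ U y) (hUC : ∀ y, U y ≤ C) (hm : 0 < m)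
    (hf : Measurable f) (hosc : ∀ y z, |f y - f z| ≤ K) (x : α) :
    |boltzmannGibbs μ (fun y => Real.exp (-U y / m)) f - f x| ≤ K ∧
      |boltzmannGibbs μ (fun y => Real.exp (-U y / m)) f - ∫ y, f y ∂μ| ≤ K * (C / m) := by
  set g : α → ℝ := fun y => Real.exp (-U y / m)
  have hg0 : ∀ y, 0 ≤ g y := fun y => (Real.exp_pos _).le
  have hg1 : ∀ y, g y ≤ 1 := fun y =>
    Real.exp_le_one_iff.2 (div_nonpos_of_nonpos_of_nonneg (neg_nonpos.2 (hU0 y)) hm.le)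
  have hgw : ∀ y, Real.exp (-C / m) ≤ g y := fun y =>
    Real.exp_le_exp.2 (div_le_div_of_nonneg_right (neg_le_neg (hUC y)) hm.le)
  have hg : Integrable g μ := Integrable.of_bound (by fun_prop) 1
    (ae_of_all _ fun y => by rw [Real.norm_eq_abs, abs_of_nonneg (hg0 y)]; exact hg1 y)
  have hfb : ∀ y, ‖f y‖ ≤ |f x| + K := fun y => by
    rw [Real.norm_eq_abs]; linarith [abs_sub_abs_le_abs_sub (f y) (f x), hosc y x]
  have hfI : Integrable f μ := Integrable.of_bound hf.aestronglyMeasurable _ (ae_of_all _ hfb)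
  have hfg : Integrable (fun y => f y * g y) μ :=
    hg.bdd_mul hf.aestronglyMeasurable (ae_of_all _ hfb)
  have hZ : 0 < ∫ y, g y ∂μ :=
    (Real.exp_pos _).trans_le (by simpa using integral_mono (integrable_const _) hg hgw)
  refine ⟨abs_boltzmannGibbs_sub_le x hfg hg hg0 hZ fun y => hosc y x, ?_⟩
  have hK0 : 0 ≤ K := (abs_nonneg _).trans (hosc x x)
  calc |boltzmannGibbs μ g f - ∫ y, f y ∂μ| ≤ K * (1 - Real.exp (-C / m)) :=
        abs_boltzmannGibbs_sub_integral_le (Real.exp_pos _) hfI hfg hg hgw hg1 fun y => by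
          rw [abs_sub_comm]
          exact abs_integral_sub_le y hfI fun z => hosc z y
    _ ≤ K * (C / m) := by
        rw [neg_div]
        exact mul_le_mul_of_nonneg_left (by linarith [Real.one_sub_le_exp_neg (C / m)]) hK0

end BoltzmannGibbs

theorem stmt15 {E : Type*} [MeasurableSpace E] (μ : Measure E) [IsProbabilityMeasure μ]
    (U : E → ℝ) (m : ℝ) (hm : 1 ≤ m)
    (hU : Measurable U) (hU0 : ∀ x, 0 ≤ U x)
    (hUbdd : BddAbove (Set.range fun x => |U x|)) :
    ∀ f : E → ℝ, Measurable f → (∀ x y, |f x - f y| ≤ 1) → ∀ x : E,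
      |m * ((Real.exp (-U x / m) * f x
            + (1 - Real.exp (-U x / m)) *
              ((∫ y, f y * Real.exp (-U y / m) ∂μ) / (∫ y, Real.exp (-U y / m) ∂μ)))
          - f x)
        - U x * ((∫ y, f y ∂μ) - f x)|
      ≤ 2 * (⨆ y, |U y|) ^ 2 / m := by
  intro f hf hosc x
  have hm0 : 0 < m := one_pos.trans_le hm
  set C := ⨆ y, |U y|
  have hUC : ∀ y, U y ≤ C := fun y => (le_abs_self _).trans (le_ciSup hUbdd y)
  obtain ⟨hΨx, hΨF⟩ := abs_boltzmannGibbs_exp_sub_le hU hU0 hUC hm0 hf hosc x (μ := μ)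
  set Ψ := boltzmannGibbs μ (fun y => Real.exp (-U y / m)) f
  set F := ∫ y, f y ∂μ
  have hjump := Real.abs_mul_one_sub_exp_neg_div_sub_le (hU0 x) hm0
  have hUx2 : U x ^ 2 ≤ C ^ 2 := pow_le_pow_left₀ (hU0 x) (hUC x) 2
  calc _ = |(m * (1 - Real.exp (-U x / m)) - U x) * (Ψ - f x) + U x * (Ψ - F)| := by
          congr 1; simp only [Ψ, boltzmannGibbs]; ring
    _ ≤ U x ^ 2 / (2 * m) * 1 + C * (1 * (C / m)) := by
          refine (abs_add_le _ _).trans (add_le_add ?_ ?_) <;> rw [abs_mul]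
          · exact mul_le_mul hjump hΨx (abs_nonneg _) (by positivity)
          · rw [abs_of_nonneg (hU0 x)]
            exact mul_le_mul (hUC x) hΨF (abs_nonneg _) ((hU0 x).trans (hUC x))
    _ = (U x ^ 2 / 2 + C ^ 2) / m := by ring
    _ ≤ 2 * C ^ 2 / m := by gcongr; linarith [sq_nonneg C]
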